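/- arXiv:2012.05449 — 4 statements merged into one kernel-verified Lean document; each statement's English description precedes it below -/
import Mathlib

section
/- Path-integral representation: for every t ≥ 1, every p ∈ [0,1] with q = 1−p, and all i, j ∈ {1,…,m}, with ρ_0 = |i⟩⟨i| and ρ_t = Φ_t ∘ ⋯ ∘ Φ_1(ρ_0), one has Tr(|j⟩⟨j| ρ_t) = Σ_{n=0}^{t} Σ_{0 < σ_1 < σ_2 < ⋯ < σ_n ≤ t} p^n q^{t−n} Σ_{i_1,…,i_n = 1}^{m} |⟨j| U_t ⋯ U_{σ_n+1} |i_n⟩|² · |⟨i_n| U_{σ_n} ⋯ U_{σ_{n−1}+1} |i_{n−1}⟩|² ⋯ |⟨i_1| U_{σ_1} ⋯ U_1 |i⟩|², where the inner sum over an empty set of measurement times (n = 0) is |⟨j| U_t ⋯ U_1 |i⟩|². -/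
/-!
Each step splits as `Φ(ρ) = (1 - p) UρU* + p Σ_a ⟨a|UρU*|a⟩ |a⟩⟨a|`. By induction on `t`,
`ρ_t` is a sum over measurement schedules `0 < σ_1 < ⋯ < σ_n ≤ t` and outcomes
`i_1, …, i_n` of the states `V|i_n⟩⟨i_n|V*`, `V = U_t ⋯ U_{σ_n + 1}`, weighted by
`p^n q^(t-n)` times the transition probabilities `|⟨i_k|U_{σ_k} ⋯ U_{σ_{k-1}+1}|i_{k-1}⟩|²`.
Applying `Φ_{t+1}` to one such term, the `(1 - p)`-branch keeps the schedule and extends `V`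
by `U_{t+1}`, while the `p`-branch appends the time `t + 1` with a new outcome `a`, at the
cost of the factor `|⟨a|U_{t+1} V|i_n⟩|²`; these are exactly the two kinds of schedules
in `1, …, t + 1`. The `(j, j)` entry of `ρ_t` then gives the formula.
-/

open Matrix BigOperators

/-- Kraus operators: `A 0 = √(1-p)·I`, `A i = √p·|i⟩⟨i|`. -/
noncomputable def krausOp (m : ℕ) (p : ℝ) : Option (Fin m) → Matrix (Fin m) (Fin m) ℂ
  | none => (Real.sqrt (1 - p) : ℂ) • (1 : Matrix (Fin m) (Fin m) ℂ)
  | some i => (Real.sqrt p : ℂ) • Matrix.single i i 1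

/-- The decoherent quantum operation `Φ(ρ) = Σ_{i=0}^m A_i U ρ U* A_i*`. -/
noncomputable def decohStep (m : ℕ) (p : ℝ) (U ρ : Matrix (Fin m) (Fin m) ℂ) :
    Matrix (Fin m) (Fin m) ℂ :=
  ∑ a : Option (Fin m), krausOp m p a * (U * ρ * Uᴴ) * (krausOp m p a)ᴴ

/-- `rhoSeq m p U ρ₀ t = Φ_t ∘ ⋯ ∘ Φ_1 (ρ₀)`. -/
noncomputable def rhoSeq (m : ℕ) (p : ℝ) (U : ℕ → Matrix (Fin m) (Fin m) ℂ)
    (ρ0 : Matrix (Fin m) (Fin m) ℂ) : ℕ → Matrix (Fin m) (Fin m) ℂ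
  | 0 => ρ0
  | (t + 1) => decohStep m p (U (t + 1)) (rhoSeq m p U ρ0 t)

/-- `Uprod U s t = U_t · U_{t-1} ⋯ U_{s+1}` (the identity if `t ≤ s`). -/
noncomputable def Uprod (m : ℕ) (U : ℕ → Matrix (Fin m) (Fin m) ℂ) (s : ℕ) :
    ℕ → Matrix (Fin m) (Fin m) ℂ
  | 0 => 1
  | (t + 1) => if t + 1 ≤ s then 1 else U (t + 1) * Uprod m U s t

lemma mul_single_mul_conjTranspose_apply_self {ι : Type*} [Fintype ι] [DecidableEq ι]
    (V : Matrix ι ι ℂ) (x a : ι) :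
    (V * Matrix.single x x (1 : ℂ) * Vᴴ) a a = ((‖V a x‖ ^ 2 : ℝ) : ℂ) := by
  simp [Matrix.mul_apply, Matrix.single, ite_and, Complex.mul_conj, Complex.normSq_eq_norm_sq]

def measTimes (t n : ℕ) : Finset (Fin n → Fin (t + 1)) :=
  Finset.univ.filter fun σ => StrictMono σ ∧ ∀ k, 1 ≤ (σ k : ℕ)

section Schedules

variable {t n : ℕ}

lemma mem_measTimes {σ : Fin n → Fin (t + 1)} :
    σ ∈ measTimes t n ↔ StrictMono σ ∧ ∀ k, 1 ≤ (σ k : ℕ) := by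
  rw [measTimes, Finset.mem_filter, and_iff_right (Finset.mem_univ _)]

lemma mem_measTimes_iff_strictMono_cons {σ : Fin n → Fin (t + 1)} :
    σ ∈ measTimes t n ↔ StrictMono (Fin.cons 0 σ : Fin (n + 1) → Fin (t + 1)) := by
  rw [mem_measTimes, Fin.strictMono_cons, and_comm]
  exact Iff.rfl

lemma le_of_mem_measTimes {σ : Fin n → Fin (t + 1)} (hσ : σ ∈ measTimes t n) : n ≤ t := by
  simpa using Fintype.card_le_of_injective _
    (mem_measTimes_iff_strictMono_cons.1 hσ).injective

lemma castSucc_comp_mem_measTimes_iff {σ : Fin n → Fin (t + 1)} :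
    Fin.castSucc ∘ σ ∈ measTimes (t + 1) n ↔ σ ∈ measTimes t n := by
  simp [mem_measTimes, StrictMono]

lemma snoc_castSucc_comp_mem_measTimes_iff {σ : Fin n → Fin (t + 1)} :
    (Fin.snoc (Fin.castSucc ∘ σ) (Fin.last (t + 1)) : Fin (n + 1) → Fin (t + 2)) ∈
      measTimes (t + 1) (n + 1) ↔ σ ∈ measTimes t n := by
  rw [mem_measTimes, mem_measTimes, ← Fin.insertNth_last', Fin.strictMono_insertNth_iff,
    Fin.insertNth_last', Fin.forall_fin_succ']
  simp [StrictMono, Fin.castSucc_lt_last, Fin.castSucc_ne_last]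

variable {M : Type*} [AddCommMonoid M]

lemma sum_measTimes_filter_not_last (f : (Fin n → Fin (t + 2)) → M) :
    ∑ σ ∈ (measTimes (t + 1) n).filter (fun σ => ¬ ∃ k, σ k = Fin.last (t + 1)), f σ =
      ∑ σ ∈ measTimes t n, f (Fin.castSucc ∘ σ) := by
  symm
  refine Finset.sum_nbij (Fin.castSucc ∘ ·) (fun σ hσ => ?_) (fun σ _ τ _ h => ?_)
    (fun σ hσ => ?_) fun _ _ => rfl
  · simpa [castSucc_comp_mem_measTimes_iff, Fin.castSucc_ne_last] using hσ
  · exact funext fun k => Fin.castSucc_injective _ (congrFun h k)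
  · simp only [Finset.coe_filter, Set.mem_ofPred_eq, not_exists] at hσ
    have hσ' : σ = Fin.castSucc ∘ fun k => (σ k).castPred (hσ.2 k) := by
      ext k
      simp
    refine ⟨_, ?_, hσ'.symm⟩
    rw [Finset.mem_coe, ← castSucc_comp_mem_measTimes_iff, ← hσ']
    exact hσ.1

lemma sum_measTimes_filter_last (f : (Fin (n + 1) → Fin (t + 2)) → M) :
    ∑ σ ∈ (measTimes (t + 1) (n + 1)).filter (fun σ => ∃ k, σ k = Fin.last (t + 1)), f σ =
      ∑ σ ∈ measTimes t n, f (Fin.snoc (Fin.castSucc ∘ σ) (Fin.last (t + 1))) := by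
  symm
  refine Finset.sum_nbij (fun σ => Fin.snoc (Fin.castSucc ∘ σ) (Fin.last (t + 1)))
    (fun σ hσ => ?_) (fun σ _ τ _ h => ?_) (fun σ hσ => ?_) fun _ _ => rfl
  · simpa [snoc_castSucc_comp_mem_measTimes_iff] using ⟨hσ, Fin.last n, by simp⟩
  · exact funext fun k => Fin.castSucc_injective _ (by simpa using congrFun h k.castSucc)
  · simp only [Finset.coe_filter, Set.mem_ofPred_eq] at hσ
    obtain ⟨hσ, k, hk⟩ := hσ
    have hmono := (mem_measTimes.1 hσ).1
    have hlast : σ (Fin.last n) = Fin.last (t + 1) :=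
      le_antisymm (Fin.le_last _) (hk ▸ hmono.monotone (Fin.le_last k))
    have hne : ∀ j : Fin n, σ j.castSucc ≠ Fin.last (t + 1) := fun j =>
      hlast ▸ (hmono (Fin.castSucc_lt_last j)).ne
    have hσ' : σ = Fin.snoc (Fin.castSucc ∘ fun j => (σ j.castSucc).castPred (hne j))
        (Fin.last (t + 1)) := by
      conv_lhs => rw [← Fin.snoc_init_self σ, hlast]
      rfl
    refine ⟨_, ?_, hσ'.symm⟩
    rw [Finset.mem_coe, ← snoc_castSucc_comp_mem_measTimes_iff, ← hσ']
    exact hσ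

/-- A schedule in `1, …, t + 1` either avoids `t + 1`, or is a schedule in `1, …, t` followed
by `t + 1`. -/
lemma sum_range_sum_measTimes_succ (F : (n : ℕ) → (Fin n → Fin (t + 2)) → M) :
    ∑ n ∈ Finset.range (t + 2), ∑ σ ∈ measTimes (t + 1) n, F n σ =
      ∑ n ∈ Finset.range (t + 1), ∑ σ ∈ measTimes t n,
        (F n (Fin.castSucc ∘ σ) + F (n + 1) (Fin.snoc (Fin.castSucc ∘ σ) (Fin.last (t + 1)))) := by
  have hunmeasured : ∑ n ∈ Finset.range (t + 2), ∑ σ ∈ measTimes (t + 1) n with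
      ¬ ∃ k, σ k = Fin.last (t + 1), F n σ =
        ∑ n ∈ Finset.range (t + 1), ∑ σ ∈ measTimes t n, F n (Fin.castSucc ∘ σ) := by
    rw [Finset.sum_range_succ, sum_measTimes_filter_not_last,
      Finset.sum_eq_zero fun σ hσ => absurd (le_of_mem_measTimes hσ) (by omega), add_zero]
    simp only [sum_measTimes_filter_not_last]
  have hmeasured : ∑ n ∈ Finset.range (t + 2), ∑ σ ∈ measTimes (t + 1) n with
      ∃ k, σ k = Fin.last (t + 1), F n σ =
        ∑ n ∈ Finset.range (t + 1), ∑ σ ∈ measTimes t n,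
          F (n + 1) (Fin.snoc (Fin.castSucc ∘ σ) (Fin.last (t + 1))) := by
    rw [Finset.sum_range_succ']
    simp [sum_measTimes_filter_last]
  simp only [← Finset.sum_filter_add_sum_filter_not (measTimes (t + 1) _)
    (fun σ => ∃ k, σ k = Fin.last (t + 1)), Finset.sum_add_distrib, hmeasured, hunmeasured]
  exact add_comm _ _

lemma cons_zero_val_comp_le (σ : Fin n → Fin (t + 1)) (k : Fin (n + 1)) :
    (Fin.cons 0 (Fin.val ∘ σ) : Fin (n + 1) → ℕ) k ≤ t :=
  Fin.cases (Nat.zero_le t) (fun j => Fin.is_le (σ j)) k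

end Schedules

section PathExpansion

variable {m : ℕ}

lemma Uprod_succ_of_le (U : ℕ → Matrix (Fin m) (Fin m) ℂ) {s t : ℕ} (h : s ≤ t) :
    Uprod m U s (t + 1) = U (t + 1) * Uprod m U s t := by
  simp [Uprod]
  omega

lemma Uprod_self (U : ℕ → Matrix (Fin m) (Fin m) ℂ) (s : ℕ) : Uprod m U s s = 1 := by
  cases s <;> simp [Uprod]

lemma decohStep_eq {p : ℝ} (hp0 : 0 ≤ p) (hp1 : p ≤ 1) (V ρ : Matrix (Fin m) (Fin m) ℂ) :
    decohStep m p V ρ = ((1 - p : ℝ) : ℂ) • (V * ρ * Vᴴ)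
      + ∑ a, (p : ℂ) • Matrix.single a a ((V * ρ * Vᴴ) a a) := by
  have hsq : ∀ {x : ℝ}, 0 ≤ x → star (Real.sqrt x : ℂ) * Real.sqrt x = x := fun hx => by
    rw [Complex.star_def, Complex.conj_ofReal, ← Complex.ofReal_mul, Real.mul_self_sqrt hx]
  simp only [decohStep, Fintype.sum_option, krausOp, conjTranspose_smul, conjTranspose_one,
    conjTranspose_single, star_one, smul_mul_assoc, mul_smul_comm, single_mul_mul_single,
    one_mul, mul_one, smul_smul, hsq hp0, hsq (sub_nonneg.mpr hp1)]

lemma decohStep_sum (p : ℝ) (V : Matrix (Fin m) (Fin m) ℂ) {α : Type*} (s : Finset α)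
    (f : α → Matrix (Fin m) (Fin m) ℂ) :
    decohStep m p V (∑ x ∈ s, f x) = ∑ x ∈ s, decohStep m p V (f x) := by
  simp only [decohStep, Finset.mul_sum, Finset.sum_mul]
  exact Finset.sum_comm

lemma decohStep_smul (p : ℝ) (V : Matrix (Fin m) (Fin m) ℂ) (c : ℂ)
    (ρ : Matrix (Fin m) (Fin m) ℂ) :
    decohStep m p V (c • ρ) = c • decohStep m p V ρ := by
  simp [decohStep, Finset.smul_sum]

noncomputable def pathProb (U : ℕ → Matrix (Fin m) (Fin m) ℂ) {n : ℕ} (τ : Fin (n + 1) → ℕ)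
    (path : Fin (n + 1) → Fin m) : ℝ :=
  ∏ k : Fin n, ‖Uprod m U (τ k.castSucc) (τ k.succ) (path k.succ) (path k.castSucc)‖ ^ 2

/-- The contribution to `ρ_t` of the trajectory that is measured at the times
`0 = τ 0 < τ 1 < ⋯ < τ n` with outcomes `path 0, …, path n`: after the last measurement the
state `|path n⟩⟨path n|` evolves unitarily up to time `t`. -/
noncomputable def pathTerm (p : ℝ) (U : ℕ → Matrix (Fin m) (Fin m) ℂ) (t : ℕ) {n : ℕ}
    (τ : Fin (n + 1) → ℕ) (path : Fin (n + 1) → Fin m) : Matrix (Fin m) (Fin m) ℂ :=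
  ((p ^ n * (1 - p) ^ (t - n) * pathProb U τ path : ℝ) : ℂ) •
    (Uprod m U (τ (Fin.last n)) t * Matrix.single (path (Fin.last n)) (path (Fin.last n)) 1 *
      (Uprod m U (τ (Fin.last n)) t)ᴴ)

lemma pathProb_snoc (U : ℕ → Matrix (Fin m) (Fin m) ℂ) {n : ℕ} (τ : Fin (n + 1) → ℕ)
    (path : Fin (n + 1) → Fin m) (s : ℕ) (a : Fin m) :
    pathProb U (Fin.snoc τ s : Fin (n + 2) → ℕ) (Fin.snoc path a) =
      pathProb U τ path * ‖Uprod m U (τ (Fin.last n)) s a (path (Fin.last n))‖ ^ 2 := by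
  simp only [pathProb, Fin.prod_univ_castSucc, Fin.succ_castSucc, Fin.snoc_castSucc,
    Fin.succ_last, Fin.snoc_last]

lemma decohStep_pathTerm {p : ℝ} (hp0 : 0 ≤ p) (hp1 : p ≤ 1) (U : ℕ → Matrix (Fin m) (Fin m) ℂ)
    {t n : ℕ} (hn : n ≤ t) (τ : Fin (n + 1) → ℕ) (hτ : τ (Fin.last n) ≤ t)
    (path : Fin (n + 1) → Fin m) :
    decohStep m p (U (t + 1)) (pathTerm p U t τ path) =
      pathTerm p U (t + 1) τ path +
        ∑ a, pathTerm p U (t + 1) (Fin.snoc τ (t + 1) : Fin (n + 2) → ℕ) (Fin.snoc path a) := by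
  have hV : U (t + 1) * (Uprod m U (τ (Fin.last n)) t *
      Matrix.single (path (Fin.last n)) (path (Fin.last n)) 1 *
      (Uprod m U (τ (Fin.last n)) t)ᴴ) * (U (t + 1))ᴴ =
      Uprod m U (τ (Fin.last n)) (t + 1) * Matrix.single (path (Fin.last n)) (path (Fin.last n)) 1 *
      (Uprod m U (τ (Fin.last n)) (t + 1))ᴴ := by
    simp only [Uprod_succ_of_le U hτ, conjTranspose_mul, Matrix.mul_assoc]
  rw [pathTerm, decohStep_smul, decohStep_eq hp0 hp1, hV, smul_add, Finset.smul_sum]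
  congr 1
  · rw [pathTerm, smul_smul, show t + 1 - n = t - n + 1 by omega]
    congr 1
    push_cast
    ring
  · refine Finset.sum_congr rfl fun a _ => ?_
    rw [pathTerm, pathProb_snoc, mul_single_mul_conjTranspose_apply_self]
    simp only [Fin.snoc_last, Uprod_self, Matrix.one_mul, conjTranspose_one,
      Nat.add_sub_add_right, smul_single, smul_eq_mul, mul_one]
    congr 1
    push_cast
    ring

lemma rhoSeq_single_eq_sum_pathTerm {p : ℝ} (hp0 : 0 ≤ p) (hp1 : p ≤ 1)
    (U : ℕ → Matrix (Fin m) (Fin m) ℂ) (i : Fin m) (t : ℕ) :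
    rhoSeq m p U (Matrix.single i i 1) t =
      ∑ n ∈ Finset.range (t + 1), ∑ σ ∈ measTimes t n, ∑ ii : Fin n → Fin m,
        pathTerm p U t (Fin.cons 0 (Fin.val ∘ σ) : Fin (n + 1) → ℕ) (Fin.cons i ii) := by
  induction t with
  | zero =>
    have h : measTimes 0 0 = {Fin.elim0} := Finset.eq_singleton_iff_unique_mem.2
      ⟨mem_measTimes.2 ⟨fun a => a.elim0, fun k => k.elim0⟩, fun σ _ => Subsingleton.elim _ _⟩
    simp [rhoSeq, pathTerm, pathProb, Uprod, h]
  | succ t ih =>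
    rw [rhoSeq, ih, sum_range_sum_measTimes_succ]
    simp only [decohStep_sum]
    refine Finset.sum_congr rfl fun n _ => Finset.sum_congr rfl fun σ hσ => ?_
    rw [Finset.sum_congr rfl fun ii _ => decohStep_pathTerm hp0 hp1 U (le_of_mem_measTimes hσ) _
      (cons_zero_val_comp_le σ _) _, Finset.sum_add_distrib]
    congr 1
    rw [← (Fin.snocEquiv fun _ => Fin m).sum_comp, Fintype.sum_prod_type, Finset.sum_comm]
    refine Finset.sum_congr rfl fun a _ => Finset.sum_congr rfl fun ii _ => ?_
    rw [Fin.comp_snoc, ← Fin.cons_snoc_eq_snoc_cons, ← Fin.cons_snoc_eq_snoc_cons]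
    rfl

end PathExpansion

/-- `σ : Fin n → Fin (t + 1)` encodes the measurement times `0 < σ_1 < ⋯ < σ_n ≤ t` and
`ii` the outcomes `i_1, …, i_n`; `Fin.cases` prepends `σ_0 = 0` and `i_0 = i`. -/
theorem stmt1_general (m : ℕ) (p : ℝ) (hp0 : 0 ≤ p) (hp1 : p ≤ 1)
    (U : ℕ → Matrix (Fin m) (Fin m) ℂ)
    (t : ℕ) (i j : Fin m) :
    Matrix.trace (Matrix.single j j 1 *
        rhoSeq m p U (Matrix.single i i 1) t) =
      ((∑ n ∈ Finset.range (t + 1),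
        ∑ σ ∈ Finset.univ.filter
            (fun σ : Fin n → Fin (t + 1) => StrictMono σ ∧ ∀ k, 1 ≤ (σ k : ℕ)),
          ∑ ii : Fin n → Fin m,
            p ^ n * (1 - p) ^ (t - n) *
              (‖(Uprod m U ((Fin.cases 0 (fun k => (σ k : ℕ)) : Fin (n+1) → ℕ) (Fin.last n)) t)
                  j ((Fin.cases i ii : Fin (n+1) → Fin m) (Fin.last n))‖ ^ 2 *
               ∏ k : Fin n,
                 ‖(Uprod m U ((Fin.cases 0 (fun k' => (σ k' : ℕ)) : Fin (n+1) → ℕ) k.castSucc)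
                      ((Fin.cases 0 (fun k' => (σ k' : ℕ)) : Fin (n+1) → ℕ) k.succ))
                    ((Fin.cases i ii : Fin (n+1) → Fin m) k.succ)
                    ((Fin.cases i ii : Fin (n+1) → Fin m) k.castSucc)‖ ^ 2) : ℝ) : ℂ) := by
  rw [rhoSeq_single_eq_sum_pathTerm hp0 hp1, trace_single_mul, one_smul]
  simp only [Matrix.sum_apply, pathTerm, Matrix.smul_apply, smul_eq_mul,
    mul_single_mul_conjTranspose_apply_self, pathProb, Fin.cons, Function.comp_def]
  push_cast
  refine Finset.sum_congr rfl fun n _ => Finset.sum_congr rfl fun σ _ =>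
    Finset.sum_congr rfl fun ii _ => ?_
  ring

/-- path-integral representation of `Tr(|j⟩⟨j| ρ_t)`.
The outer sum is over the number `n` of measurement times, the next sum over strictly
increasing sequences `0 < σ 0 < σ 1 < ⋯ < σ (n-1) ≤ t` (encoded as strictly monotone maps
`σ : Fin n → Fin (t+1)` with all values `≥ 1`), and the inner sum over the outcomes
`i_1, …, i_n ∈ {1,…,m}` (encoded as `ii : Fin n → Fin m`); `σ` and `ii` are extended by
`σ_0 = 0` and `i_0 = i` via `Fin.cases`. -/
theorem stmt1 (m : ℕ) (p : ℝ) (hp0 : 0 ≤ p) (hp1 : p ≤ 1)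
    (U : ℕ → Matrix (Fin m) (Fin m) ℂ)
    (hU : ∀ n, U n ∈ Matrix.unitaryGroup (Fin m) ℂ)
    (t : ℕ) (ht : 1 ≤ t) (i j : Fin m) :
    Matrix.trace (Matrix.single j j 1 *
        rhoSeq m p U (Matrix.single i i 1) t) =
      ((∑ n ∈ Finset.range (t + 1),
        ∑ σ ∈ Finset.univ.filter
            (fun σ : Fin n → Fin (t + 1) => StrictMono σ ∧ ∀ k, 1 ≤ (σ k : ℕ)),
          ∑ ii : Fin n → Fin m,
            p ^ n * (1 - p) ^ (t - n) *
              (‖(Uprod m U ((Fin.cases 0 (fun k => (σ k : ℕ)) : Fin (n+1) → ℕ) (Fin.last n)) t)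
                  j ((Fin.cases i ii : Fin (n+1) → Fin m) (Fin.last n))‖ ^ 2 *
               ∏ k : Fin n,
                 ‖(Uprod m U ((Fin.cases 0 (fun k' => (σ k' : ℕ)) : Fin (n+1) → ℕ) k.castSucc)
                      ((Fin.cases 0 (fun k' => (σ k' : ℕ)) : Fin (n+1) → ℕ) k.succ))
                    ((Fin.cases i ii : Fin (n+1) → Fin m) k.succ)
                    ((Fin.cases i ii : Fin (n+1) → Fin m) k.castSucc)‖ ^ 2) : ℝ) : ℂ) :=
  stmt1_general m p hp0 hp1 U t i j
end

section
/- Time-inhomogeneous ergodic theorem: let Σ = {1,…,m} be a finite state space, let Π be an m×m matrix with nonnegative entries, identical rows (Π_{ij} = Π_{1j} for all i, j), and row sums 1, and let (P_k)_{k≥1} be Markov (row-stochastic) transition matrices on Σ. Suppose there is k_0 such that for all k ≥ k_0 one has Π P_k = Π and P_k ≥ δ_k Π entrywise, where 0 ≤ δ_k ≤ 1. If ∏_{k=k_0}^{∞} (1 − δ_k) = 0, then for every s with 1 ≤ s ≤ k_0, the matrix product P_s P_{s+1} ⋯ P_n converges to Π as n → ∞. -/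
/-!
Write `T_n = P_{k₀} ⋯ P_n`. Since `Π` has identical rows and `T_n` is stochastic, `T_n Π = Π`;
together with `Π P_k = Π` this gives `T_{n+1} - Π = (T_n - Π) (P_{n+1} - δ_{n+1} Π)`. The second
factor is entrywise nonnegative with row sums `1 - δ_{n+1}`, so in the `∞`-operator norm
`‖T_n - Π‖ ≤ ‖T_{k₀-1} - Π‖ ∏_{k=k₀}^{n} (1 - δ_k) → 0`. Finally
`P_s ⋯ P_n = (P_s ⋯ P_{k₀-1}) T_n → (P_s ⋯ P_{k₀-1}) Π = Π`.
-/

open Matrix BigOperators Filter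

/-- `Mprod P s n = P_s · P_{s+1} ⋯ P_n` (ordered matrix product; identity if `n < s`). -/
noncomputable def Mprod (m : ℕ) (P : ℕ → Matrix (Fin m) (Fin m) ℝ) (s n : ℕ) :
    Matrix (Fin m) (Fin m) ℝ :=
  ((List.range (n + 1 - s)).map (fun k => P (s + k))).prod

/-- A row-stochastic (Markov) matrix: nonnegative entries, each row summing to 1. -/
def IsStochastic {m : ℕ} (P : Matrix (Fin m) (Fin m) ℝ) : Prop :=
  (∀ i j, 0 ≤ P i j) ∧ ∀ i, ∑ j, P i j = 1

open Finset Topology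

theorem isStochastic_iff {m : ℕ} {P : Matrix (Fin m) (Fin m) ℝ} :
    IsStochastic P ↔ P ∈ rowStochastic ℝ (Fin m) :=
  mem_rowStochastic_iff_sum.symm

section Mprod

variable {m : ℕ} {P : ℕ → Matrix (Fin m) (Fin m) ℝ}

theorem Mprod_of_lt {s n : ℕ} (h : n < s) : Mprod m P s n = 1 := by
  simp [Mprod, Nat.sub_eq_zero_of_le h]

theorem Mprod_succ {s n : ℕ} (h : s ≤ n + 1) :
    Mprod m P s (n + 1) = Mprod m P s n * P (n + 1) := by
  have hlen : n + 1 + 1 - s = n + 1 - s + 1 := by omega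
  have hlast : s + (n + 1 - s) = n + 1 := by omega
  simp [Mprod, hlen, List.range_succ, hlast]

theorem Mprod_eq_mul {s b n : ℕ} (hs : s ≤ b + 1) (hn : b ≤ n) :
    Mprod m P s n = Mprod m P s b * Mprod m P (b + 1) n := by
  induction n, hn using Nat.le_induction with
  | base => rw [Mprod_of_lt (Nat.lt_succ_self b), mul_one]
  | succ n hn ih => rw [Mprod_succ (by omega), Mprod_succ (by omega), ih, mul_assoc]

theorem Mprod_mem_rowStochastic {s : ℕ} (hP : ∀ k, s ≤ k → P k ∈ rowStochastic ℝ (Fin m))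
    (n : ℕ) : Mprod m P s n ∈ rowStochastic ℝ (Fin m) :=
  Submonoid.list_prod_mem _ <| by
    simp only [List.mem_map, List.mem_range]
    rintro _ ⟨k, _, rfl⟩
    exact hP _ (Nat.le_add_right s k)

end Mprod

theorem tendsto_zero_of_norm_succ_le {E : Type*} [SeminormedAddCommGroup E] {x : ℕ → E}
    {c : ℕ → ℝ} {b : ℕ} (hc : ∀ n, b < n → 0 ≤ c n)
    (hx : ∀ n, b ≤ n → ‖x (n + 1)‖ ≤ c (n + 1) * ‖x n‖)
    (hprod : Tendsto (fun n => ∏ k ∈ Ioc b n, c k) atTop (𝓝 0)) :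
    Tendsto x atTop (𝓝 0) := by
  have hbound : ∀ n, b ≤ n → ‖x n‖ ≤ ‖x b‖ * ∏ k ∈ Ioc b n, c k := by
    intro n hn
    induction n, hn using Nat.le_induction with
    | base => simp
    | succ n hn ih =>
      calc ‖x (n + 1)‖ ≤ c (n + 1) * ‖x n‖ := hx n hn
        _ ≤ c (n + 1) * (‖x b‖ * ∏ k ∈ Ioc b n, c k) := by gcongr; exact hc _ (by omega)
        _ = ‖x b‖ * ∏ k ∈ Ioc b (n + 1), c k := by rw [prod_Ioc_succ_top hn]; ring
  refine squeeze_zero_norm' ?_ (by simpa using hprod.const_mul ‖x b‖)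
  filter_upwards [eventually_ge_atTop b] with n hn using hbound n hn

theorem sub_mul_sub_smul_eq {R A : Type*} [CommRing R] [Ring A] [Algebra R A] {T Q P : A}
    (c : R) (hT : T * Q = Q) (hQ : Q * Q = Q) (hQP : Q * P = Q) :
    (T - Q) * (P - c • Q) = T * P - Q := by
  rw [sub_mul, mul_sub, mul_sub, mul_smul_comm, mul_smul_comm, hT, hQ, hQP]
  abel

namespace Matrix

theorem mul_eq_of_rows_eq {n R : Type*} [Fintype n] [Semiring R] {M Q : Matrix n n R}
    (hM : ∀ i, ∑ j, M i j = 1) (hQ : ∀ i i' j, Q i j = Q i' j) : M * Q = Q := by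
  ext i j
  simp only [mul_apply, hQ _ i j, ← sum_mul, hM i, one_mul]

end Matrix

section LinftyOp

-- The topology of this norm is definitionally the product topology of `Matrix`, so the limit
-- in `tendsto_Mprod_of_lower_bound` is a limit for the usual topology.
attribute [local instance] Matrix.linftyOpNormedAddCommGroup

namespace Matrix

theorem linfty_opNorm_le_of_nonneg {l n : Type*} [Fintype l] [Fintype n] {Q : Matrix l n ℝ}
    {r : ℝ} (hr : 0 ≤ r) (hQ : ∀ i j, 0 ≤ Q i j) (hsum : ∀ i, ∑ j, Q i j ≤ r) : ‖Q‖ ≤ r := by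
  rw [linfty_opNorm_def, ← NNReal.coe_mk r hr, NNReal.coe_le_coe, Finset.sup_le_iff]
  intro i _
  rw [← NNReal.coe_le_coe]
  push_cast
  simpa [Real.norm_eq_abs, abs_of_nonneg (hQ i _)] using hsum i

theorem linfty_opNorm_sub_smul_le {n : Type*} [Fintype n] {P Q : Matrix n n ℝ} {d : ℝ}
    (hd : d ≤ 1) (hP : ∀ i, ∑ j, P i j = 1) (hQ : ∀ i, ∑ j, Q i j = 1)
    (hle : ∀ i j, d * Q i j ≤ P i j) : ‖P - d • Q‖ ≤ 1 - d := by
  refine linfty_opNorm_le_of_nonneg (by linarith) (fun i j => ?_) (fun i => ?_)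
  · simpa using hle i j
  · simp [sum_sub_distrib, ← mul_sum, hP i, hQ i]

end Matrix

theorem tendsto_Mprod_of_lower_bound {m b : ℕ} {Pi : Matrix (Fin m) (Fin m) ℝ}
    {P : ℕ → Matrix (Fin m) (Fin m) ℝ} {δ : ℕ → ℝ}
    (hPiRows : ∀ i i' j, Pi i j = Pi i' j) (hPiSum : ∀ i, ∑ j, Pi i j = 1)
    (hP : ∀ k, b < k → P k ∈ rowStochastic ℝ (Fin m)) (hδ : ∀ k, b < k → δ k ≤ 1)
    (hInv : ∀ k, b < k → Pi * P k = Pi) (hLower : ∀ k, b < k → ∀ i j, δ k * Pi i j ≤ P k i j)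
    (hProd : Tendsto (fun n => ∏ k ∈ Ioc b n, (1 - δ k)) atTop (𝓝 0)) :
    Tendsto (fun n => Mprod m P (b + 1) n) atTop (𝓝 Pi) := by
  have hT : ∀ n, Mprod m P (b + 1) n * Pi = Pi := fun n =>
    mul_eq_of_rows_eq (sum_row_of_mem_rowStochastic (Mprod_mem_rowStochastic hP n)) hPiRows
  have hPi : Pi * Pi = Pi := mul_eq_of_rows_eq hPiSum hPiRows
  have hdiff : Tendsto (fun n => Mprod m P (b + 1) n - Pi) atTop (𝓝 0) := by
    refine tendsto_zero_of_norm_succ_le (fun k hk => sub_nonneg.2 (hδ k hk)) (fun n hn => ?_) hProd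
    have hk : b < n + 1 := Nat.lt_succ_of_le hn
    rw [Mprod_succ (by omega), ← sub_mul_sub_smul_eq (δ (n + 1)) (hT n) hPi (hInv _ hk)]
    calc _ ≤ ‖Mprod m P (b + 1) n - Pi‖ * ‖P (n + 1) - δ (n + 1) • Pi‖ := linfty_opNorm_mul _ _
      _ ≤ ‖Mprod m P (b + 1) n - Pi‖ * (1 - δ (n + 1)) := by
        gcongr
        exact linfty_opNorm_sub_smul_le (hδ _ hk) (sum_row_of_mem_rowStochastic (hP _ hk))
          hPiSum (hLower _ hk)
      _ = _ := mul_comm _ _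
  simpa using hdiff.add_const Pi

end LinftyOp

theorem stmt3_general (m : ℕ) (Pi : Matrix (Fin m) (Fin m) ℝ)
    (hPiRows : ∀ i i' j, Pi i j = Pi i' j)
    (hPiSum : ∀ i, ∑ j, Pi i j = 1)
    (P : ℕ → Matrix (Fin m) (Fin m) ℝ)
    (hP : ∀ k, 1 ≤ k → IsStochastic (P k))
    (k0 : ℕ) (δ : ℕ → ℝ)
    (hδ : ∀ k, k0 ≤ k → 0 ≤ δ k ∧ δ k ≤ 1)
    (hInv : ∀ k, k0 ≤ k → Pi * P k = Pi)
    (hLower : ∀ k, k0 ≤ k → ∀ i j, δ k * Pi i j ≤ P k i j)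
    (hProd : Tendsto (fun n => ∏ k ∈ Finset.Icc k0 n, (1 - δ k)) atTop (nhds 0)) :
    ∀ s, 1 ≤ s → s ≤ k0 →
      Tendsto (fun n => Mprod m P s n) atTop (nhds Pi) := by
  intro s hs hsk0
  obtain ⟨b, rfl⟩ : ∃ b, k0 = b + 1 := ⟨k0 - 1, by omega⟩
  have hstoch : ∀ k, s ≤ k → P k ∈ rowStochastic ℝ (Fin m) :=
    fun k hk => isStochastic_iff.1 (hP k (hs.trans hk))
  have htail : Tendsto (fun n => Mprod m P (b + 1) n) atTop (𝓝 Pi) :=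
    tendsto_Mprod_of_lower_bound hPiRows hPiSum (fun k hk => hstoch k (by omega))
      (fun k hk => (hδ k hk).2) hInv hLower (by simpa [Icc_add_one_left_eq_Ioc] using hProd)
  have hhead : Mprod m P s b * Pi = Pi :=
    mul_eq_of_rows_eq (sum_row_of_mem_rowStochastic (Mprod_mem_rowStochastic hstoch b)) hPiRows
  refine (hhead ▸ htail.const_mul (Mprod m P s b)).congr' ?_
  filter_upwards [eventually_ge_atTop b] with n hn using (Mprod_eq_mul hsk0 hn).symm

/-- time-inhomogeneous ergodic theorem: if `Π` is row-stochastic with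
identical rows, the `P_k` are row-stochastic, and for all `k ≥ k₀` one has `Π P_k = Π` and
`P_k ≥ δ_k Π` entrywise with `0 ≤ δ_k ≤ 1`, and if `∏_{k=k₀}^{n}(1-δ_k) → 0`, then
`P_s P_{s+1} ⋯ P_n → Π` for every `1 ≤ s ≤ k₀`. -/
theorem stmt3 (m : ℕ) (Pi : Matrix (Fin m) (Fin m) ℝ)
    (hPiNonneg : ∀ i j, 0 ≤ Pi i j)
    (hPiRows : ∀ i i' j, Pi i j = Pi i' j)
    (hPiSum : ∀ i, ∑ j, Pi i j = 1)
    (P : ℕ → Matrix (Fin m) (Fin m) ℝ)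
    (hP : ∀ k, 1 ≤ k → IsStochastic (P k))
    (k0 : ℕ) (hk0 : 1 ≤ k0) (δ : ℕ → ℝ)
    (hδ : ∀ k, k0 ≤ k → 0 ≤ δ k ∧ δ k ≤ 1)
    (hInv : ∀ k, k0 ≤ k → Pi * P k = Pi)
    (hLower : ∀ k, k0 ≤ k → ∀ i j, δ k * Pi i j ≤ P k i j)
    (hProd : Tendsto (fun n => ∏ k ∈ Finset.Icc k0 n, (1 - δ k)) atTop (nhds 0)) :
    ∀ s, 1 ≤ s → s ≤ k0 →
      Tendsto (fun n => Mprod m P s n) atTop (nhds Pi) :=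
  stmt3_general m Pi hPiRows hPiSum P hP k0 δ hδ hInv hLower hProd
end

section
/- Let G be an m×m Hermitian matrix with |G_{jk}| ≥ ε₀ > 0 for all j, k, let θ ≥ 0 satisfy θ ≤ min(ε₀/(4‖G‖_∞²), 1/(4‖G‖_∞)), and let U = exp(iθG). Then for all j ≠ k, the matrix entry satisfies |U_{jk}| ≥ (1/2)·θ·ε₀. -/
/-!
Off the diagonal the identity vanishes, so with `A = iθG` we have
`U_{jk} = A_{jk} + (exp A - 1 - A)_{jk}`. The first term has modulus `θ |G_{jk}| ≥ θε₀`.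
`infNorm` is the `ℓ^∞` operator norm, a Banach algebra norm dominating every entry, and in any
Banach algebra `‖exp A - 1 - A‖ ≤ e^{‖A‖} - 1 - ‖A‖ ≤ ‖A‖²` once `‖A‖ ≤ 1`. The bounds on `θ`
give `‖A‖ = θ‖G‖_∞ ≤ 1/4` and `‖A‖² ≤ θε₀/4`, hence `|U_{jk}| ≥ 3θε₀/4`.
-/

open Matrix BigOperators

/-- The operator norm of a matrix acting on `(ℂ^m, ‖·‖_∞)`: the maximum row sum of
absolute values of entries. -/
noncomputable def infNorm {m : ℕ} (G : Matrix (Fin m) (Fin m) ℂ) : ℝ :=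
  ⨆ j, ∑ k, ‖G j k‖

open NormedSpace
open scoped Nat

section ExpRemainder

variable {𝔸 : Type*} [NormedRing 𝔸] [NormedAlgebra ℚ 𝔸] [CompleteSpace 𝔸]

theorem hasSum_exp_sub_one_sub (a : 𝔸) :
    HasSum (fun n => ((n + 2)! : ℚ)⁻¹ • a ^ (n + 2)) (exp a - 1 - a) := by
  have h := (hasSum_nat_add_iff' 2).mpr (exp_series_hasSum_exp' (𝕂 := ℚ) a)
  simpa [Finset.sum_range_succ, sub_sub] using h

theorem norm_exp_sub_one_sub_le (a : 𝔸) : ‖exp a - 1 - a‖ ≤ Real.exp ‖a‖ - 1 - ‖a‖ := by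
  rw [Real.exp_eq_exp_ℝ]
  refine (hasSum_exp_sub_one_sub a).norm_le_of_bounded (hasSum_exp_sub_one_sub ‖a‖) fun n => ?_
  rw [norm_smul, Rat.smul_def]
  push_cast
  rw [norm_inv, ← Rat.norm_cast_real, Rat.cast_natCast, Real.norm_natCast]
  exact mul_le_mul_of_nonneg_left (norm_pow_le' a (by positivity)) (by positivity)

theorem norm_exp_sub_one_sub_le_sq {a : 𝔸} (ha : ‖a‖ ≤ 1) : ‖exp a - 1 - a‖ ≤ ‖a‖ ^ 2 :=
  (norm_exp_sub_one_sub_le a).trans <|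
    (le_abs_self _).trans (Real.abs_exp_sub_one_sub_id_le (by rwa [abs_norm]))

end ExpRemainder

section InfNorm

variable {m : ℕ}

theorem sum_norm_apply_le_infNorm (G : Matrix (Fin m) (Fin m) ℂ) (i : Fin m) :
    ∑ k, ‖G i k‖ ≤ infNorm G :=
  le_ciSup (f := fun i => ∑ k, ‖G i k‖) (Set.finite_range _).bddAbove i

theorem norm_apply_le_infNorm (G : Matrix (Fin m) (Fin m) ℂ) (i j : Fin m) :
    ‖G i j‖ ≤ infNorm G :=
  (Finset.single_le_sum (fun k _ => norm_nonneg (G i k)) (Finset.mem_univ j)).trans <|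
    sum_norm_apply_le_infNorm G i

theorem infNorm_smul (c : ℂ) (G : Matrix (Fin m) (Fin m) ℂ) :
    infNorm (c • G) = ‖c‖ * infNorm G := by
  simp only [infNorm, Matrix.smul_apply, smul_eq_mul, norm_mul, ← Finset.mul_sum]
  exact (Real.mul_iSup_of_nonneg (norm_nonneg c) _).symm

attribute [local instance] Matrix.linftyOpNormedRing Matrix.linftyOpNormedAlgebra

theorem Matrix.linfty_opNorm_eq_infNorm (G : Matrix (Fin m) (Fin m) ℂ) : ‖G‖ = infNorm G := by
  have hrow (i : Fin m) : ∑ k, ‖G i k‖ = ((∑ k, ‖G i k‖₊ : NNReal) : ℝ) := by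
    rw [NNReal.coe_sum]; rfl
  have hnonneg : 0 ≤ infNorm G := Real.iSup_nonneg fun i => by positivity
  rw [linfty_opNorm_def]
  refine le_antisymm ?_ (Real.iSup_le (fun i => ?_) (NNReal.coe_nonneg _))
  · change _ ≤ ((⟨infNorm G, hnonneg⟩ : NNReal) : ℝ)
    refine NNReal.coe_le_coe.mpr (Finset.sup_le fun i _ => ?_)
    have hi := sum_norm_apply_le_infNorm G i
    rw [hrow] at hi
    exact NNReal.coe_le_coe.mp hi
  · rw [hrow]
    exact NNReal.coe_le_coe.mpr (Finset.le_sup (f := fun i => ∑ k, ‖G i k‖₊) (Finset.mem_univ i))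

theorem norm_apply_sub_infNorm_sq_le_norm_exp_apply {A : Matrix (Fin m) (Fin m) ℂ}
    (hA : infNorm A ≤ 1) {i j : Fin m} (hij : i ≠ j) :
    ‖A i j‖ - infNorm A ^ 2 ≤ ‖exp A i j‖ := by
  rw [← linfty_opNorm_eq_infNorm] at hA ⊢
  have hsplit : A i j = exp A i j - (exp A - 1 - A) i j := by
    simp [one_apply_ne hij]
  have hrem : ‖(exp A - 1 - A) i j‖ ≤ ‖A‖ ^ 2 :=
    ((norm_apply_le_infNorm _ i j).trans (linfty_opNorm_eq_infNorm _).ge).trans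
      (norm_exp_sub_one_sub_le_sq hA)
  have htriangle := norm_sub_le (exp A i j) ((exp A - 1 - A) i j)
  rw [← hsplit] at htriangle
  linarith

end InfNorm

theorem stmt5_general (m : ℕ) (G : Matrix (Fin m) (Fin m) ℂ)
    (ε₀ : ℝ) (hε₀ : 0 < ε₀) (hGlow : ∀ j k, ε₀ ≤ ‖G j k‖)
    (θ : ℝ) (hθ0 : 0 ≤ θ)
    (hθ : θ ≤ min (ε₀ / (4 * infNorm G ^ 2)) (1 / (4 * infNorm G)))
    (j k : Fin m) (hjk : j ≠ k) :
    θ * ε₀ / 2 ≤ ‖(NormedSpace.exp (((θ : ℂ) * Complex.I) • G)) j k‖ := by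
  set A := ((θ : ℂ) * Complex.I) • G with hA
  have hscale : ‖(θ : ℂ) * Complex.I‖ = θ := by simp [abs_of_nonneg hθ0]
  have hnorm : infNorm A = θ * infNorm G := by rw [infNorm_smul, hscale]
  have hentry : θ * ε₀ ≤ ‖A j k‖ := by
    rw [hA, Matrix.smul_apply, smul_eq_mul, norm_mul, hscale]
    exact mul_le_mul_of_nonneg_left (hGlow j k) hθ0
  have hG : 0 < infNorm G := hε₀.trans_le ((hGlow j j).trans (norm_apply_le_infNorm G j j))
  have hsmall : infNorm A ≤ 1 / 4 := by
    rw [hnorm]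
    have hθG := (le_div_iff₀ (by positivity)).mp (le_min_iff.mp hθ).2
    linarith
  have hsq : infNorm A ^ 2 ≤ θ * ε₀ / 4 := by
    rw [hnorm]
    have hθG := mul_le_mul_of_nonneg_left ((le_div_iff₀ (by positivity)).mp (le_min_iff.mp hθ).1) hθ0
    linarith
  have hexp := norm_apply_sub_infNorm_sq_le_norm_exp_apply (hsmall.trans (by norm_num)) hjk
  linarith [mul_nonneg hθ0 hε₀.le]

/-- if `G` is Hermitian with `|G_{jk}| ≥ ε₀ > 0` for all `j,k` and
`0 ≤ θ ≤ min(ε₀/(4‖G‖_∞²), 1/(4‖G‖_∞))`, then `U = exp(iθG)` satisfies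
`|U_{jk}| ≥ θε₀/2` for all `j ≠ k`. -/
theorem stmt5 (m : ℕ) (G : Matrix (Fin m) (Fin m) ℂ) (hG : G.IsHermitian)
    (ε₀ : ℝ) (hε₀ : 0 < ε₀) (hGlow : ∀ j k, ε₀ ≤ ‖G j k‖)
    (θ : ℝ) (hθ0 : 0 ≤ θ)
    (hθ : θ ≤ min (ε₀ / (4 * infNorm G ^ 2)) (1 / (4 * infNorm G)))
    (j k : Fin m) (hjk : j ≠ k) :
    θ * ε₀ / 2 ≤ ‖(NormedSpace.exp (((θ : ℂ) * Complex.I) • G)) j k‖ :=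
  stmt5_general m G ε₀ hε₀ hGlow θ hθ0 hθ j k hjk
end

section
/- Let T_1, T_2, … be i.i.d. geometric random variables with success probability p ∈ (0,1] and let 0 < ζ ≤ 1. Then T_{n+1}² / (T_1 + T_2 + ⋯ + T_n)^ζ → 0 almost surely as n → ∞. -/
/-!
A geometric variable exceeds `m` with probability `(1 - p) ^ m`, so the first Borel–Cantelli
lemma gives `T n = O(log n)` almost surely, while `T k ≥ 1` makes the partial sum at least `n`.
Hence the ratio is eventually at most `O((log n) ^ 2 / n ^ ζ) → 0`.
-/

open MeasureTheory ProbabilityTheory Filter BigOperators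

section GeometricTail

variable {Ω : Type*} [MeasurableSpace Ω] {μ : Measure Ω} {p : ℝ} {X : Ω → ℕ}

theorem measure_lt_eq_of_geometric (hp0 : 0 < p) (hp1 : p ≤ 1) (hX : Measurable X)
    (hgeom : ∀ k, 1 ≤ k → μ {ω | X ω = k} = ENNReal.ofReal (p * (1 - p) ^ (k - 1))) (m : ℕ) :
    μ {ω | m < X ω} = ENNReal.ofReal ((1 - p) ^ m) := by
  have hq0 : 0 ≤ 1 - p := by linarith
  have hterms : (fun j : ℕ => p * (1 - p) ^ (m + j)) = fun j => p * (1 - p) ^ m * (1 - p) ^ j := by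
    funext j; rw [pow_add]; ring
  have hsum : HasSum (fun j : ℕ => p * (1 - p) ^ (m + j)) ((1 - p) ^ m) := by
    have := (hasSum_geometric_of_lt_one hq0 (by linarith)).mul_left (p * (1 - p) ^ m)
    rwa [sub_sub_cancel, mul_right_comm, mul_inv_cancel₀ hp0.ne', one_mul, ← hterms] at this
  have hunion : {ω | m < X ω} = ⋃ j : ℕ, {ω | X ω = m + 1 + j} := by
    ext ω
    simp only [Set.mem_ofPred_eq, Set.mem_iUnion]
    exact ⟨fun h => ⟨X ω - (m + 1), by omega⟩, fun ⟨j, hj⟩ => by omega⟩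
  have hdisj : Pairwise (Function.onFun Disjoint fun j : ℕ => {ω | X ω = m + 1 + j}) := by
    intro i j hij
    simp only [Function.onFun, Set.disjoint_left, Set.mem_ofPred_eq]
    omega
  rw [hunion, measure_iUnion hdisj fun j => hX (measurableSet_singleton _),
    ← hsum.tsum_eq, ENNReal.ofReal_tsum_of_nonneg (fun j => by positivity) hsum.summable]
  refine tsum_congr fun j => ?_
  rw [hgeom _ (by omega)]
  congr 3
  omega

theorem ae_one_le_of_geometric [IsProbabilityMeasure μ] (hp0 : 0 < p) (hp1 : p ≤ 1)
    (hX : Measurable X)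
    (hgeom : ∀ k, 1 ≤ k → μ {ω | X ω = k} = ENNReal.ofReal (p * (1 - p) ^ (k - 1))) :
    ∀ᵐ ω ∂μ, 1 ≤ X ω := by
  have hpos : μ {ω | 0 < X ω} = 1 := by
    simpa using measure_lt_eq_of_geometric hp0 hp1 hX hgeom 0
  have hmeas : MeasurableSet {ω | 0 < X ω} := hX measurableSet_Ioi
  rw [← prob_compl_eq_zero_iff hmeas] at hpos
  exact measure_mono_null (fun ω hω => by simpa [Nat.one_le_iff_ne_zero] using hω) hpos

end GeometricTail

theorem summable_pow_natCeil_mul_log {r c : ℝ} (hr0 : 0 < r) (hr1 : r < 1)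
    (hc : c * Real.log r < -1) : Summable fun n : ℕ => r ^ ⌈c * Real.log n⌉₊ := by
  rw [← summable_nat_add_iff 1]
  refine Summable.of_nonneg_of_le (fun n => by positivity) (fun n => ?_)
    ((summable_nat_add_iff 1).mpr (Real.summable_nat_rpow.mpr hc))
  have hn : (0 : ℝ) < ((n + 1 : ℕ) : ℝ) := by positivity
  calc r ^ ⌈c * Real.log ((n + 1 : ℕ) : ℝ)⌉₊
      = r ^ (⌈c * Real.log ((n + 1 : ℕ) : ℝ)⌉₊ : ℝ) := (Real.rpow_natCast r _).symm
    _ ≤ r ^ (c * Real.log ((n + 1 : ℕ) : ℝ)) :=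
        Real.rpow_le_rpow_of_exponent_ge hr0 hr1.le (Nat.le_ceil _)
    _ = ((n + 1 : ℕ) : ℝ) ^ (c * Real.log r) := by
        rw [Real.rpow_def_of_pos hr0, Real.rpow_def_of_pos hn]
        ring_nf

theorem ae_eventually_le_mul_log_of_measure_lt_le {Ω : Type*} [MeasurableSpace Ω]
    {μ : Measure Ω} {r : ℝ} (hr0 : 0 < r) (hr1 : r < 1) (X : ℕ → Ω → ℕ)
    (htail : ∀ n m, μ {ω | m < X n ω} ≤ ENNReal.ofReal (r ^ m)) :
    ∃ c : ℝ, ∀ᵐ ω ∂μ, ∀ᶠ n : ℕ in atTop, (X n ω : ℝ) ≤ c * Real.log n + 1 := by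
  have hlog : Real.log r < 0 := Real.log_neg hr0 hr1
  set c := 2 / -Real.log r
  have hc : c * Real.log r < -1 := by
    have : c * Real.log r = -2 := by
      simp only [c]
      field_simp [hlog.ne]
    linarith
  have hsum := summable_pow_natCeil_mul_log hr0 hr1 hc
  have hfinite : ∑' n : ℕ, μ {ω | ⌈c * Real.log n⌉₊ < X n ω} ≠ ⊤ := by
    refine ne_top_of_le_ne_top (ENNReal.ofReal_ne_top (r := ∑' n : ℕ, r ^ ⌈c * Real.log n⌉₊)) ?_
    rw [ENNReal.ofReal_tsum_of_nonneg (fun n => by positivity) hsum]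
    exact ENNReal.tsum_le_tsum fun n => htail n _
  refine ⟨c, ?_⟩
  filter_upwards [ae_eventually_notMem hfinite] with ω hω
  filter_upwards [hω, eventually_ge_atTop 1] with n hn hn1
  have hlog_n : 0 ≤ c * Real.log n :=
    mul_nonneg (div_nonneg zero_le_two (by linarith)) (Real.log_nonneg (by exact_mod_cast hn1))
  have hle : (X n ω : ℝ) ≤ ⌈c * Real.log n⌉₊ := by exact_mod_cast not_lt.mp hn
  linarith [Nat.ceil_lt_add_one hlog_n]

theorem tendsto_mul_log_add_one_sq_div_rpow {ζ : ℝ} (hζ : 0 < ζ) (c : ℝ) :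
    Tendsto (fun n : ℕ => (c * Real.log n + 1) ^ 2 / (n : ℝ) ^ ζ) atTop (nhds 0) := by
  have hζ2 : 0 < ζ / 2 := by linarith
  have hone : (fun _ : ℝ => (1 : ℝ)) =o[atTop] fun x : ℝ => x ^ (ζ / 2) :=
    (Asymptotics.isLittleO_const_left.mpr <| Or.inr <|
      tendsto_norm_atTop_atTop.comp (tendsto_rpow_atTop hζ2))
  have hsq : (fun x : ℝ => (x ^ (ζ / 2)) ^ 2) =ᶠ[atTop] fun x => x ^ ζ := by
    filter_upwards [eventually_ge_atTop (0 : ℝ)] with x hx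
    rw [← Real.rpow_natCast, ← Real.rpow_mul hx]
    norm_num
  have hlittle : (fun x : ℝ => (c * Real.log x + 1) ^ 2) =o[atTop] fun x => x ^ ζ :=
    ((((isLittleO_log_rpow_atTop hζ2).const_mul_left c).add hone).pow two_pos).trans_eventuallyEq hsq
  exact hlittle.tendsto_div_nhds_zero.comp tendsto_natCast_atTop_atTop

theorem tendsto_sq_div_sum_rpow_of_le_mul_log {x : ℕ → ℕ} {c ζ : ℝ} (hζ : 0 < ζ)
    (hx1 : ∀ n, 1 ≤ x n) (hxlog : ∀ᶠ n : ℕ in atTop, (x n : ℝ) ≤ c * Real.log n + 1) :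
    Tendsto (fun n : ℕ => (x n : ℝ) ^ 2 / ((∑ k ∈ Finset.range n, x k : ℕ) : ℝ) ^ ζ)
      atTop (nhds 0) := by
  refine squeeze_zero' (Eventually.of_forall fun n => by positivity) ?_
    (tendsto_mul_log_add_one_sq_div_rpow hζ c)
  filter_upwards [hxlog, eventually_ge_atTop 1] with n hn hn1
  have hsum : (n : ℝ) ≤ ((∑ k ∈ Finset.range n, x k : ℕ) : ℝ) := by
    exact_mod_cast (Finset.card_nsmul_le_sum _ _ 1 fun k _ => hx1 k).trans_eq' (by simp)
  have hn0 : (0 : ℝ) < n := by exact_mod_cast hn1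
  exact div_le_div₀ (by positivity) (pow_le_pow_left₀ (Nat.cast_nonneg _) hn 2)
    (Real.rpow_pos_of_pos hn0 ζ) (Real.rpow_le_rpow hn0.le hsum hζ.le)

/-- Here the interarrival times are indexed from `0`, so `T k` plays the role of `T_{k+1}`. -/
theorem stmt11_general (p : ℝ) (hp0 : 0 < p) (hp1 : p ≤ 1) (ζ : ℝ) (hζ0 : 0 < ζ)
    {Ω : Type*} [MeasureSpace Ω] [IsProbabilityMeasure (ℙ : Measure Ω)]
    (T : ℕ → Ω → ℕ) (hTmeas : ∀ n, Measurable (T n))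
    (hTgeom : ∀ n k, 1 ≤ k →
      (ℙ {ω | T n ω = k} : ENNReal) = ENNReal.ofReal (p * (1 - p) ^ (k - 1))) :
    ∀ᵐ ω ∂(ℙ : Measure Ω),
      Tendsto (fun n : ℕ => (T n ω : ℝ) ^ 2 /
          ((∑ k ∈ Finset.range n, T k ω : ℕ) : ℝ) ^ ζ) atTop (nhds 0) := by
  -- `max` keeps the rate positive, since `1 - p` vanishes when `p = 1`.
  set r := max (1 - p) 2⁻¹
  have htail : ∀ n m, (ℙ {ω | m < T n ω} : ENNReal) ≤ ENNReal.ofReal (r ^ m) := fun n m => by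
    rw [measure_lt_eq_of_geometric hp0 hp1 (hTmeas n) (hTgeom n)]
    exact ENNReal.ofReal_le_ofReal (pow_le_pow_left₀ (by linarith) (le_max_left _ _) m)
  obtain ⟨c, hlog⟩ := ae_eventually_le_mul_log_of_measure_lt_le
    (lt_max_of_lt_right (by norm_num)) (max_lt (by linarith) (by norm_num)) T htail
  have hpos : ∀ᵐ ω ∂(ℙ : Measure Ω), ∀ n, 1 ≤ T n ω :=
    ae_all_iff.mpr fun n => ae_one_le_of_geometric hp0 hp1 (hTmeas n) (hTgeom n)
  filter_upwards [hpos, hlog] with ω hω1 hωlog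
  exact tendsto_sq_div_sum_rpow_of_le_mul_log hζ0 hω1 hωlog

/-- if `T_1, T_2, …` are i.i.d. geometric with success probability
`p ∈ (0,1]` and `0 < ζ ≤ 1`, then `T_{n+1}²/(T_1 + ⋯ + T_n)^ζ → 0` almost surely.
(Here the interarrival times are indexed from `0`, so `T k` plays the role of `T_{k+1}`.) -/
theorem stmt11 (p : ℝ) (hp0 : 0 < p) (hp1 : p ≤ 1) (ζ : ℝ) (hζ0 : 0 < ζ) (hζ1 : ζ ≤ 1)
    {Ω : Type*} [MeasureSpace Ω] [IsProbabilityMeasure (ℙ : Measure Ω)]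
    (T : ℕ → Ω → ℕ) (hTmeas : ∀ n, Measurable (T n))
    (hTindep : iIndepFun T ℙ)
    (hTgeom : ∀ n k, 1 ≤ k →
      (ℙ {ω | T n ω = k} : ENNReal) = ENNReal.ofReal (p * (1 - p) ^ (k - 1))) :
    ∀ᵐ ω ∂(ℙ : Measure Ω),
      Tendsto (fun n : ℕ => (T n ω : ℝ) ^ 2 /
          ((∑ k ∈ Finset.range n, T k ω : ℕ) : ℝ) ^ ζ) atTop (nhds 0) :=
  stmt11_general p hp0 hp1 ζ hζ0 T hTmeas hTgeom
end
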